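/- If x is an element of a field extension E of a field F of characteristic zero and x is solvable by radicals over F, then x is algebraic over F and the Galois group of the splitting field (Galois closure) of the minimal polynomial of x over F is a solvable group. -/

import Mathlib

theorem IsSolvableByRad.mem_solvableByRad {F E : Type*} [Field F] [Field E] [Algebra F E]
    {x : E} (hx : IsSolvableByRad F x) : x ∈ solvableByRad F E := by
  induction hx with
  | base a => exact algebraMap_mem _ a
  | add a b _ _ ha hb => exact add_mem ha hb
  | neg a _ ha => exact neg_mem ha
  | mul a b _ _ ha hb => exact mul_mem ha hb
  | inv a _ ha => exact inv_mem ha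
  | rad a n hn _ ha => exact solvableByRad.rad_mem hn ha

theorem solvableByRad_isIntegral_and_gal_solvable_general
    (F : Type*) [Field F] (E : Type*) [Field E] [Algebra F E]
    (x : E) (hx : IsSolvableByRad F x) :
    IsIntegral F x ∧ IsSolvable (minpoly F x).Gal :=
  ⟨isIntegral_of_mem_solvableByRad hx.mem_solvableByRad,
    isSolvable_gal_minpoly hx.mem_solvableByRad⟩

/-- If `x` is an element of a field extension `E` of a field `F` of characteristic zero
and `x` is solvable by radicals over `F`, then `x` is algebraic (integral) over `F` and
the Galois group of the splitting field of the minimal polynomial of `x` over `F` is a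
solvable group. -/
theorem solvableByRad_isIntegral_and_gal_solvable
    (F : Type*) [Field F] [CharZero F] (E : Type*) [Field E] [Algebra F E]
    (x : E) (hx : IsSolvableByRad F x) :
    IsIntegral F x ∧ IsSolvable (minpoly F x).Gal :=
  solvableByRad_isIntegral_and_gal_solvable_general F E x hx
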